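/- arXiv:2507.21643 — 3 statements merged into one kernel-verified Lean document; each statement's English description precedes it below -/
import Mathlib

section
/- For every integer n ≥ 1 and every nonnegative integer r, ∑_{i=0}^{r} (−1)^{r−i}·C(r,i)·∑_{j=0}^{∞} ((−1)^j/j!)·w_{n,i+j} = (r!/e)·w̃_{n,r}, where each inner series ∑_{j≥0} ((−1)^j/j!)·w_{n,i+j} converges. In particular (r = 0), ∑_{j=0}^{∞} ((−1)^j/j!)·w_{n,j} = w̃_n/e. -/
/-- Stirling numbers of the second kind. -/
def stirling2 : ℕ → ℕ → ℕ
  | 0, 0 => 1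
  | 0, _ + 1 => 0
  | _ + 1, 0 => 0
  | n + 1, k + 1 => (k + 1) * stirling2 n (k + 1) + stirling2 n k

/-- Derangement numbers `d_n = n! ∑_{i=0}^n (-1)^i / i!`. -/
noncomputable def derang (n : ℕ) : ℝ :=
  (n.factorial : ℝ) * ∑ i ∈ Finset.range (n + 1), (-1 : ℝ) ^ i / (i.factorial : ℝ)

/-- Partial derangement numbers `d_{n,r}`. -/
noncomputable def pderang (n r : ℕ) : ℝ :=
  if r ≤ n then (n.choose r : ℝ) * derang (n - r) else 0

/-- Partial deranged Bell numbers `w̃_{n,r}`. -/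
noncomputable def pdb (n r : ℕ) : ℝ :=
  ∑ k ∈ Finset.range (n + 1), (stirling2 n k : ℝ) * pderang k r

/-- `r`-ordered Bell numbers `w_{n,r} = ∑_{k=0}^∞ (k+r)^n / 2^{k+1}`. -/
noncomputable def ordBellR (n r : ℕ) : ℝ :=
  ∑' k : ℕ, ((k : ℝ) + (r : ℝ)) ^ n / 2 ^ (k + 1)

/-!
Expanding `(j + m) ^ n` in falling factorials and using Vandermonde together with
`∑_j C(j, t) / 2^(j+1) = 1` gives `w_{n,m} = ∑_k S(n,k) k! ∑_{l ≤ k} C(m, l)`.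
The alternating sum over `i` is the `r`-th forward difference in `m`, and `Δ` lowers the upper
limit of the partial row sum `∑_{l ≤ k} C(m, l)` by one, so `Δ^r` leaves `∑_{l ≤ k - r} C(m, l)`
(or `0` when `r > k`). Since `∑_j (-1)^j / j! · C(j, l) = (-1)^l / (l! e)`, pairing with
`(-1)^j / j!` turns that partial row sum into `d_{k-r} / ((k - r)! e)`. Convergence of the series
for the shifted sequences follows from the Gregory–Newton formula, which writes `w_{n,i+j}` as a
combination of the `Δ^s w_{n,·} (j)`.
-/

open Finset fwdDiff

theorem stirling2_eq_stirlingSecond : stirling2 = Nat.stirlingSecond := by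
  funext n k
  induction n generalizing k with
  | zero => cases k <;> rfl
  | succ n ih => cases k <;> simp [stirling2, Nat.stirlingSecond, ih]

theorem Nat.mul_descFactorial (x k : ℕ) :
    x * x.descFactorial k = x.descFactorial (k + 1) + k * x.descFactorial k := by
  rcases le_or_gt k x with h | h
  · rw [Nat.descFactorial_succ, ← Nat.add_mul, Nat.sub_add_cancel h]
  · simp [Nat.descFactorial_succ, Nat.descFactorial_eq_zero_iff_lt.2 h]

theorem Nat.pow_eq_sum_stirlingSecond_mul_descFactorial (n x : ℕ) :
    x ^ n = ∑ k ∈ range (n + 1), stirlingSecond n k * x.descFactorial k := by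
  induction n with
  | zero => simp
  | succ n ih =>
    have shift : ∑ k ∈ range (n + 1), k * stirlingSecond n k * x.descFactorial k
        = ∑ k ∈ range (n + 1), (k + 1) * stirlingSecond n (k + 1) * x.descFactorial (k + 1) := by
      rw [sum_range_succ', sum_range_succ, stirlingSecond_eq_zero_of_lt (lt_add_one n)]
      simp
    calc x ^ (n + 1)
        = ∑ k ∈ range (n + 1), stirlingSecond n k * x.descFactorial (k + 1)
            + ∑ k ∈ range (n + 1), k * stirlingSecond n k * x.descFactorial k := by
          rw [pow_succ, ih, sum_mul, ← sum_add_distrib]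
          exact sum_congr rfl fun k _ ↦ by rw [mul_assoc, mul_comm _ x, mul_descFactorial]; ring
      _ = ∑ k ∈ range (n + 1), stirlingSecond (n + 1) (k + 1) * x.descFactorial (k + 1) := by
          rw [shift, ← sum_add_distrib]
          exact sum_congr rfl fun k _ ↦ by rw [stirlingSecond_succ_succ]; ring
      _ = _ := by simp [sum_range_succ' _ (n + 1)]

theorem hasSum_choose_mul_geometric {𝕜 : Type*} [NormedField 𝕜] [CompleteSpace 𝕜] (t : ℕ) {r : 𝕜}
    (hr : ‖r‖ < 1) : HasSum (fun n ↦ (n.choose t : 𝕜) * r ^ n) (r ^ t / (1 - r) ^ (t + 1)) := by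
  have hzero : ∑ i ∈ range t, (i.choose t : 𝕜) * r ^ i = 0 :=
    sum_eq_zero fun i hi ↦ by simp [Nat.choose_eq_zero_of_lt (mem_range.1 hi)]
  have hshift := hasSum_nat_add_iff (f := fun n ↦ (n.choose t : 𝕜) * r ^ n)
    (g := r ^ t / (1 - r) ^ (t + 1)) t
  rw [hzero, add_zero] at hshift
  refine hshift.1 ?_
  rw [div_eq_mul_one_div]
  simpa only [pow_add, ← mul_assoc, mul_comm (r ^ t)] using
    (hasSum_choose_mul_geometric_of_norm_lt_one t hr).mul_left (r ^ t)

theorem hasSum_choose_div_two_pow_succ (t : ℕ) :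
    HasSum (fun j : ℕ ↦ (j.choose t : ℝ) / 2 ^ (j + 1)) 1 := by
  have h := (hasSum_choose_mul_geometric t (r := (1 / 2 : ℝ)) (by norm_num)).div_const 2
  have hterm : (fun j : ℕ ↦ (j.choose t : ℝ) / 2 ^ (j + 1))
      = fun j ↦ (j.choose t : ℝ) * (1 / 2) ^ j / 2 := by
    funext j; rw [pow_succ, one_div, inv_pow]; field_simp
  have hvalue : (1 / 2 : ℝ) ^ t / (1 - 1 / 2) ^ (t + 1) / 2 = 1 := by
    norm_num [pow_succ]; field_simp
  rw [hvalue] at h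
  rwa [hterm]

noncomputable def chooseRowSum (k m : ℕ) : ℝ :=
  ∑ l ∈ range (k + 1), (m.choose l : ℝ)

theorem hasSum_add_choose_div_two_pow_succ (m k : ℕ) :
    HasSum (fun j : ℕ ↦ ((j + m).choose k : ℝ) / 2 ^ (j + 1)) (chooseRowSum k m) := by
  have vandermonde (j : ℕ) : ((j + m).choose k : ℝ)
      = ∑ l ∈ range (k + 1), (m.choose l : ℝ) * (j.choose (k - l) : ℝ) := by
    rw [add_comm, Nat.add_choose_eq, Nat.sum_antidiagonal_eq_sum_range_succ_mk]
    push_cast; rfl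
  simp only [vandermonde, sum_div, mul_div_assoc]
  simpa [chooseRowSum] using
    hasSum_sum fun l _ ↦ (hasSum_choose_div_two_pow_succ (k - l)).mul_left (m.choose l : ℝ)

theorem ordBellR_eq_sum_chooseRowSum (n m : ℕ) :
    ordBellR n m = ∑ k ∈ range (n + 1), (stirling2 n k * k.factorial : ℝ) * chooseRowSum k m := by
  refine HasSum.tsum_eq ?_
  have expand (j : ℕ) : ((j : ℝ) + m) ^ n / 2 ^ (j + 1) = ∑ k ∈ range (n + 1),
      (stirling2 n k * k.factorial : ℝ) * (((j + m).choose k : ℝ) / 2 ^ (j + 1)) := by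
    rw [← Nat.cast_add, ← Nat.cast_pow, Nat.pow_eq_sum_stirlingSecond_mul_descFactorial,
      stirling2_eq_stirlingSecond]
    simp [Nat.descFactorial_eq_factorial_mul_choose, sum_div, mul_div_assoc, mul_assoc]
  simp only [expand]
  exact hasSum_sum fun k _ ↦ (hasSum_add_choose_div_two_pow_succ m k).mul_left _

theorem fwdDiff_chooseRowSum_succ (k : ℕ) : Δ_[1] (chooseRowSum (k + 1)) = chooseRowSum k := by
  funext m
  simp only [fwdDiff, chooseRowSum, ← sum_sub_distrib]
  rw [sum_range_succ']
  simp [Nat.choose_succ_succ']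

theorem fwdDiff_chooseRowSum_zero : Δ_[1] (chooseRowSum 0) = 0 := by
  funext m
  simp [fwdDiff, chooseRowSum]

theorem fwdDiff_iter_chooseRowSum (r k : ℕ) :
    Δ_[1] ^[r] (chooseRowSum k) = if r ≤ k then chooseRowSum (k - r) else 0 := by
  induction r generalizing k with
  | zero => simp
  | succ r ih =>
    rw [Function.iterate_succ_apply]
    rcases k with _ | k
    · rw [fwdDiff_chooseRowSum_zero, if_neg (by omega)]
      exact Function.iterate_fixed (by funext; simp [fwdDiff]) r
    · simp [fwdDiff_chooseRowSum_succ, ih]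

theorem Real.hasSum_pow_div_factorial_mul_choose (x : ℝ) (b : ℕ) :
    HasSum (fun j : ℕ ↦ x ^ j / j.factorial * j.choose b) (x ^ b / b.factorial * Real.exp x) := by
  have hzero : ∑ i ∈ range b, x ^ i / i.factorial * (i.choose b : ℝ) = 0 :=
    sum_eq_zero fun i hi ↦ by simp [Nat.choose_eq_zero_of_lt (mem_range.1 hi)]
  have hshift := hasSum_nat_add_iff (f := fun j : ℕ ↦ x ^ j / j.factorial * (j.choose b : ℝ))
    (g := x ^ b / b.factorial * Real.exp x) b
  rw [hzero, add_zero] at hshift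
  refine hshift.1 ?_
  have hterm (j : ℕ) : x ^ (j + b) / (j + b).factorial * ((j + b).choose b : ℝ)
      = x ^ b / b.factorial * (x ^ j / j.factorial) := by
    rw [add_comm j b, Nat.cast_add_choose, pow_add]
    field_simp
  simp only [hterm, Real.exp_eq_exp_ℝ]
  exact (NormedSpace.expSeries_div_hasSum_exp x).mul_left _

theorem hasSum_neg_one_pow_div_factorial_mul_chooseRowSum (k : ℕ) :
    HasSum (fun j : ℕ ↦ (-1) ^ j / j.factorial * chooseRowSum k j)
      (derang k / k.factorial / Real.exp 1) := by
  have h := hasSum_sum fun l (_ : l ∈ range (k + 1)) ↦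
    Real.hasSum_pow_div_factorial_mul_choose (-1) l
  rw [← sum_mul, Real.exp_neg] at h
  simp only [chooseRowSum, mul_sum]
  convert h using 1
  rw [derang]
  field_simp

theorem hasSum_fwdDiff_iter_chooseRowSum (r k : ℕ) :
    HasSum (fun j : ℕ ↦ (-1) ^ j / j.factorial * Δ_[1] ^[r] (chooseRowSum k) j)
      (r.factorial / k.factorial * pderang k r / Real.exp 1) := by
  rw [fwdDiff_iter_chooseRowSum]
  split_ifs with hrk
  · convert hasSum_neg_one_pow_div_factorial_mul_chooseRowSum (k - r) using 1
    rw [pderang, if_pos hrk, Nat.cast_choose ℝ hrk]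
    field_simp
  · simp [pderang, hrk, hasSum_zero]

theorem hasSum_fwdDiff_iter_ordBellR (n r : ℕ) :
    HasSum (fun j : ℕ ↦ (-1) ^ j / j.factorial * Δ_[1] ^[r] (ordBellR n) j)
      (r.factorial / Real.exp 1 * pdb n r) := by
  have expand : ordBellR n
      = ∑ k ∈ range (n + 1), (stirling2 n k * k.factorial : ℝ) • chooseRowSum k :=
    funext fun m ↦ by simp [ordBellR_eq_sum_chooseRowSum]
  have hvalue : r.factorial / Real.exp 1 * pdb n r = ∑ k ∈ range (n + 1),
      (stirling2 n k * k.factorial : ℝ) *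
        (r.factorial / k.factorial * pderang k r / Real.exp 1) := by
    simp only [pdb, mul_sum]
    exact sum_congr rfl fun k _ ↦ by field_simp
  rw [expand, fwdDiff_iter_finsetSum, hvalue]
  refine (hasSum_sum fun k _ ↦ (hasSum_fwdDiff_iter_chooseRowSum r k).mul_left _).congr_fun
    fun j ↦ ?_
  simp only [fwdDiff_iter_const_smul, Finset.sum_apply, Pi.smul_apply, smul_eq_mul, mul_sum]
  exact sum_congr rfl fun _ _ ↦ by ring

section ForwardDifferenceSeries

variable {R : Type*} [CommRing R] [TopologicalSpace R] [IsTopologicalRing R] {g f : ℕ → R}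

theorem summable_mul_comp_add_of_summable_fwdDiff_iter
    (h : ∀ s, Summable fun j ↦ g j * Δ_[1] ^[s] f j) (i : ℕ) :
    Summable fun j ↦ g j * f (i + j) := by
  have newton (j : ℕ) : f (i + j) = ∑ s ∈ range (i + 1), i.choose s • Δ_[1] ^[s] f j := by
    rw [← shift_eq_sum_fwdDiff_iter, add_comm, smul_eq_mul, mul_one]
  simp only [newton, nsmul_eq_mul, mul_sum]
  exact summable_sum fun s _ ↦ by simpa only [mul_left_comm] using (h s).mul_left (i.choose s : R)

theorem sum_alternating_mul_tsum_comp_add [T2Space R]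
    (h : ∀ i, Summable fun j ↦ g j * f (i + j)) (r : ℕ) :
    ∑ i ∈ range (r + 1), (-1) ^ (r - i) * (r.choose i : R) * ∑' j, g j * f (i + j)
      = ∑' j, g j * Δ_[1] ^[r] f j := by
  calc ∑ i ∈ range (r + 1), (-1) ^ (r - i) * (r.choose i : R) * ∑' j, g j * f (i + j)
      = ∑ i ∈ range (r + 1), ∑' j, (-1) ^ (r - i) * (r.choose i : R) * (g j * f (i + j)) :=
        sum_congr rfl fun i _ ↦ ((h i).tsum_mul_left _).symm
    _ = ∑' j, ∑ i ∈ range (r + 1), (-1) ^ (r - i) * (r.choose i : R) * (g j * f (i + j)) :=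
        (Summable.tsum_finsetSum fun i _ ↦ (h i).mul_left _).symm
    _ = ∑' j, g j * Δ_[1] ^[r] f j := tsum_congr fun j ↦ by
        rw [fwdDiff_iter_eq_sum_shift, mul_sum]
        refine sum_congr rfl fun i _ ↦ ?_
        simp only [zsmul_eq_mul, smul_eq_mul, mul_one, add_comm j]
        push_cast
        ring

end ForwardDifferenceSeries

theorem sum_alternating_ordBellR_eq_general (n r : ℕ) :
    (∀ i ≤ r, Summable fun j : ℕ => (-1 : ℝ) ^ j / (j.factorial : ℝ) * ordBellR n (i + j)) ∧
    (∑ i ∈ Finset.range (r + 1), (-1 : ℝ) ^ (r - i) * (r.choose i : ℝ) *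
        ∑' j : ℕ, (-1 : ℝ) ^ j / (j.factorial : ℝ) * ordBellR n (i + j) =
      ((r.factorial : ℝ) / Real.exp 1) * pdb n r) ∧
    (∑' j : ℕ, (-1 : ℝ) ^ j / (j.factorial : ℝ) * ordBellR n j = pdb n 0 / Real.exp 1) := by
  have summable (i : ℕ) :=
    summable_mul_comp_add_of_summable_fwdDiff_iter
      (fun s ↦ (hasSum_fwdDiff_iter_ordBellR n s).summable) i
  refine ⟨fun i _ ↦ summable i, ?_, ?_⟩
  · rw [sum_alternating_mul_tsum_comp_add summable]
    exact (hasSum_fwdDiff_iter_ordBellR n r).tsum_eq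
  · simpa [div_eq_inv_mul] using (hasSum_fwdDiff_iter_ordBellR n 0).tsum_eq

/-- For `n ≥ 1`, each series `∑_{j≥0} ((-1)^j/j!) w_{n,i+j}` converges, and
`∑_{i=0}^r (-1)^{r-i} C(r,i) ∑_{j≥0} ((-1)^j/j!) w_{n,i+j} = (r!/e) w̃_{n,r}`;
in particular `∑_{j≥0} ((-1)^j/j!) w_{n,j} = w̃_n / e`. -/
theorem sum_alternating_ordBellR_eq (n r : ℕ) (hn : 1 ≤ n) :
    (∀ i ≤ r, Summable fun j : ℕ => (-1 : ℝ) ^ j / (j.factorial : ℝ) * ordBellR n (i + j)) ∧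
    (∑ i ∈ Finset.range (r + 1), (-1 : ℝ) ^ (r - i) * (r.choose i : ℝ) *
        ∑' j : ℕ, (-1 : ℝ) ^ j / (j.factorial : ℝ) * ordBellR n (i + j) =
      ((r.factorial : ℝ) / Real.exp 1) * pdb n r) ∧
    (∑' j : ℕ, (-1 : ℝ) ^ j / (j.factorial : ℝ) * ordBellR n j = pdb n 0 / Real.exp 1) :=
  sum_alternating_ordBellR_eq_general n r
end

section
/- For all nonnegative integers n and r and every real (or polynomial variable) y, r!·(w̃_{n,r}(y) − (r+1)·w̃_{n,r+1}(y)) = y^r · ∑_{i=0}^{r} (−1)^{r−i}·C(r,i)·φ_{n,i}(−y). -/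
/-- Partial deranged Bell polynomials `w̃_{n,r}(y)`. -/
noncomputable def pdbPoly (n r : ℕ) (y : ℝ) : ℝ :=
  ∑ k ∈ Finset.range (n + 1), (stirling2 n k : ℝ) * pderang k r * y ^ k

/-- Exponential polynomials `φ_n(y) = ∑_{k=0}^n {n brace k} y^k`. -/
def expPoly (n : ℕ) (y : ℝ) : ℝ :=
  ∑ k ∈ Finset.range (n + 1), (stirling2 n k : ℝ) * y ^ k

/-- `r`-exponential polynomials `φ_{n,r}(y) = ∑_{k=0}^n C(n,k) r^k φ_{n-k}(y)`. -/
def expPolyR (n r : ℕ) (y : ℝ) : ℝ :=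
  ∑ k ∈ Finset.range (n + 1), (n.choose k : ℝ) * (r : ℝ) ^ k * expPoly (n - k) y

open Finset

lemma stirling2_zero_of_lt : ∀ {n k : ℕ}, n < k → stirling2 n k = 0
  | 0, 0, h => absurd h (lt_irrefl 0)
  | 0, _ + 1, _ => rfl
  | n + 1, 0, h => by omega
  | n + 1, k + 1, h => by
      have h1 : n < k + 1 := by omega
      have h2 : n < k := by omega
      simp [stirling2, stirling2_zero_of_lt h1, stirling2_zero_of_lt h2]

lemma derang_zero : derang 0 = 1 := by simp [derang]

lemma derang_succ (m : ℕ) :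
    derang (m + 1) = ((m : ℝ) + 1) * derang m + (-1) ^ (m + 1) := by
  have h : ((m + 1).factorial : ℝ) ≠ 0 := Nat.cast_ne_zero.mpr (Nat.factorial_ne_zero _)
  rw [derang, derang, Finset.sum_range_succ]
  push_cast [Nat.factorial_succ]
  field_simp

lemma step2 (k r : ℕ) :
    (r.factorial : ℝ) * (pderang k r - (r + 1 : ℝ) * pderang k (r + 1)) =
      (-1) ^ r * (-1) ^ k * (k.descFactorial r : ℝ) := by
  rcases Nat.lt_or_ge k r with h | h
  · rw [pderang, pderang, if_neg (by omega), if_neg (by omega),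
      Nat.descFactorial_eq_zero_iff_lt.2 h]
    simp
  · obtain ⟨s, rfl⟩ : ∃ s, k = r + s := ⟨k - r, by omega⟩
    cases s with
    | zero =>
      rw [pderang, pderang, if_pos (by omega), if_neg (by omega)]
      simp only [Nat.add_zero, Nat.sub_self, Nat.choose_self, derang_zero,
        Nat.descFactorial_self]
      have e2 : (-1 : ℝ) ^ r * (-1) ^ r = 1 := by
        rw [← pow_add]; exact Even.neg_one_pow ⟨r, rfl⟩
      push_cast
      linear_combination -(r.factorial : ℝ) * e2
    | succ s =>
      have e1 : r + (s + 1) - r = s + 1 := by omega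
      have e2 : r + (s + 1) - (r + 1) = s := by omega
      rw [pderang, pderang, if_pos (by omega), if_pos (by omega), e1, e2, derang_succ]
      have hD : ((r + (s + 1)).descFactorial r : ℝ)
          = (r.factorial : ℝ) * ((r + (s + 1)).choose r : ℝ) := by
        exact_mod_cast congrArg (Nat.cast : ℕ → ℝ)
          (Nat.descFactorial_eq_factorial_mul_choose (r + (s + 1)) r)
      have hD2 : ((r + (s + 1)).descFactorial (r + 1) : ℝ)
          = ((r + 1).factorial : ℝ) * ((r + (s + 1)).choose (r + 1) : ℝ) := by
        exact_mod_cast congrArg (Nat.cast : ℕ → ℝ)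
          (Nat.descFactorial_eq_factorial_mul_choose (r + (s + 1)) (r + 1))
      have hD3 : ((r + (s + 1)).descFactorial (r + 1) : ℝ)
          = ((s : ℝ) + 1) * ((r + (s + 1)).descFactorial r : ℝ) := by
        have : (r + (s + 1)).descFactorial (r + 1)
            = (s + 1) * (r + (s + 1)).descFactorial r := by
          rw [Nat.descFactorial_succ, e1]
        exact_mod_cast congrArg (Nat.cast : ℕ → ℝ) this
      have hfac : ((r + 1).factorial : ℝ) = ((r : ℝ) + 1) * (r.factorial : ℝ) := by
        rw [Nat.factorial_succ]; push_cast; ring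
      have hsgn : (-1 : ℝ) ^ r * (-1) ^ (r + (s + 1)) = (-1) ^ (s + 1) := by
        rw [pow_add, ← mul_assoc, ← pow_add]
        have : Even (r + r) := ⟨r, rfl⟩
        rw [this.neg_one_pow, one_mul]
      linear_combination
        (-(((s : ℝ) + 1) * derang s + (-1 : ℝ) ^ (s + 1))) * hD
        + derang s * (((r + (s + 1)).choose (r + 1) : ℝ) * hfac + hD2 - hD3)
        - ((r + (s + 1)).descFactorial r : ℝ) * hsgn

lemma leibniz (a b : ℕ → ℕ) (n : ℕ) :
    ∑ m ∈ range (n + 2), (n + 1).choose m * a m * b (n + 1 - m)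
      = ∑ m ∈ range (n + 1), n.choose m * (a (m + 1) * b (n - m) + a m * b (n - m + 1)) := by
  rw [Finset.sum_range_succ']
  have h1 : ∀ m ∈ range (n + 1),
      (n + 1).choose (m + 1) * a (m + 1) * b (n + 1 - (m + 1))
        = n.choose m * a (m + 1) * b (n - m) + n.choose (m + 1) * a (m + 1) * b (n - m) := by
    intro m _
    have e : n + 1 - (m + 1) = n - m := by omega
    rw [e, Nat.choose_succ_succ, Nat.add_mul, Nat.add_mul]
  rw [Finset.sum_congr rfl h1, Finset.sum_add_distrib]
  have h2 : ∑ m ∈ range (n + 1), n.choose (m + 1) * a (m + 1) * b (n - m)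
        + (n + 1).choose 0 * a 0 * b (n + 1 - 0)
      = ∑ m ∈ range (n + 1), n.choose m * a m * b (n - m + 1) := by
    have h3 : ∑ m ∈ range (n + 2), n.choose m * a m * b (n + 1 - m)
        = ∑ m ∈ range (n + 1), n.choose (m + 1) * a (m + 1) * b (n - m)
          + (n + 1).choose 0 * a 0 * b (n + 1 - 0) := by
      rw [Finset.sum_range_succ']
      congr 1
      · apply Finset.sum_congr rfl; intro m _
        have e : n + 1 - (m + 1) = n - m := by omega
        rw [e]
      · simp
    rw [← h3, Finset.sum_range_succ, Nat.choose_succ_self, Nat.zero_mul, Nat.zero_mul,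
      Nat.add_zero]
    apply Finset.sum_congr rfl; intro m hm
    simp only [Finset.mem_range] at hm
    have e : n + 1 - m = n - m + 1 := by omega
    rw [e]
  simp only [Nat.mul_add]
  rw [Finset.sum_add_distrib]
  have e1 : ∑ x ∈ range (n + 1), n.choose x * (a (x + 1) * b (n - x))
      = ∑ x ∈ range (n + 1), n.choose x * a (x + 1) * b (n - x) := by
    apply Finset.sum_congr rfl; intro m _; rw [Nat.mul_assoc]
  have e2 : ∑ x ∈ range (n + 1), n.choose x * (a x * b (n - x + 1))
      = ∑ x ∈ range (n + 1), n.choose x * a x * b (n - x + 1) := by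
    apply Finset.sum_congr rfl; intro m _; rw [Nat.mul_assoc]
  rw [e1, e2]
  omega

lemma convB : ∀ n r j : ℕ,
    ∑ m ∈ range (n + 1), n.choose m * stirling2 m r * stirling2 (n - m) j
      = (r + j).choose r * stirling2 n (r + j) := by
  intro n
  induction n with
  | zero =>
    intro r j
    rw [Finset.sum_range_one]
    match r, j with
    | 0, 0 => rfl
    | 0, j + 1 => simp [stirling2]
    | r + 1, j =>
      have e : r + 1 + j = (r + j) + 1 := by omega
      rw [e]; simp [stirling2]
  | succ n ih =>
    intro r j
    have hl := leibniz (fun m => stirling2 m r) (fun l => stirling2 l j) n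
    rw [hl]
    match r, j with
    | 0, 0 =>
      simp [stirling2]
    | 0, J + 1 =>
      have h1 : ∀ m ∈ range (n + 1),
          n.choose m * (stirling2 (m + 1) 0 * stirling2 (n - m) (J + 1)
            + stirling2 m 0 * stirling2 (n - m + 1) (J + 1))
          = (J + 1) * (n.choose m * stirling2 m 0 * stirling2 (n - m) (J + 1))
            + n.choose m * stirling2 m 0 * stirling2 (n - m) J := by
        intro m _
        show n.choose m * (0 * _ + stirling2 m 0 * ((J + 1) * stirling2 (n - m) (J + 1)
          + stirling2 (n - m) J)) = _
        ring
      rw [Finset.sum_congr rfl h1, Finset.sum_add_distrib, ← Finset.mul_sum, ih 0 (J + 1),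
        ih 0 J]
      simp only [Nat.zero_add]
      show (J + 1) * (Nat.choose (J + 1) 0 * stirling2 n (J + 1))
          + Nat.choose J 0 * stirling2 n J
        = Nat.choose (J + 1) 0 * stirling2 (n + 1) (J + 1)
      simp [stirling2]
    | R + 1, 0 =>
      have h1 : ∀ m ∈ range (n + 1),
          n.choose m * (stirling2 (m + 1) (R + 1) * stirling2 (n - m) 0
            + stirling2 m (R + 1) * stirling2 (n - m + 1) 0)
          = (R + 1) * (n.choose m * stirling2 m (R + 1) * stirling2 (n - m) 0)
            + n.choose m * stirling2 m R * stirling2 (n - m) 0 := by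
        intro m _
        show n.choose m * (((R + 1) * stirling2 m (R + 1) + stirling2 m R)
          * stirling2 (n - m) 0 + stirling2 m (R + 1) * 0) = _
        ring
      rw [Finset.sum_congr rfl h1, Finset.sum_add_distrib, ← Finset.mul_sum, ih (R + 1) 0,
        ih R 0]
      simp only [Nat.add_zero]
      show (R + 1) * (Nat.choose (R + 1) (R + 1) * stirling2 n (R + 1))
          + Nat.choose R R * stirling2 n R
        = Nat.choose (R + 1) (R + 1) * stirling2 (n + 1) (R + 1)
      simp [stirling2]
    | R + 1, J + 1 =>
      have h1 : ∀ m ∈ range (n + 1),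
          n.choose m * (stirling2 (m + 1) (R + 1) * stirling2 (n - m) (J + 1)
            + stirling2 m (R + 1) * stirling2 (n - m + 1) (J + 1))
          = ((R + 1) + (J + 1)) * (n.choose m * stirling2 m (R + 1) * stirling2 (n - m) (J + 1))
            + (n.choose m * stirling2 m R * stirling2 (n - m) (J + 1)
              + n.choose m * stirling2 m (R + 1) * stirling2 (n - m) J) := by
        intro m _
        show n.choose m * (((R + 1) * stirling2 m (R + 1) + stirling2 m R)
            * stirling2 (n - m) (J + 1)
          + stirling2 m (R + 1) * ((J + 1) * stirling2 (n - m) (J + 1)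
            + stirling2 (n - m) J)) = _
        ring
      rw [Finset.sum_congr rfl h1, Finset.sum_add_distrib, Finset.sum_add_distrib,
        ← Finset.mul_sum, ih (R + 1) (J + 1), ih R (J + 1), ih (R + 1) J]
      have e1 : R + (J + 1) = R + J + 1 := by omega
      have e2 : R + 1 + J = R + J + 1 := by omega
      have e3 : R + 1 + (J + 1) = (R + J + 1) + 1 := by omega
      rw [e1, e2, e3]
      show (R + J + 1 + 1) * ((R + J + 1 + 1).choose (R + 1) * stirling2 n (R + J + 1 + 1))
          + ((R + J + 1).choose R * stirling2 n (R + J + 1)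
            + (R + J + 1).choose (R + 1) * stirling2 n (R + J + 1))
        = (R + J + 1 + 1).choose (R + 1)
            * ((R + J + 1 + 1) * stirling2 n (R + J + 1 + 1) + stirling2 n (R + J + 1))
      rw [show (R + J + 1 + 1).choose (R + 1) = (R + J + 1).choose R + (R + J + 1).choose (R + 1)
        from Nat.choose_succ_succ (R + J + 1) R]
      ring

lemma lemA : ∀ m r : ℕ, ∑ i ∈ range (r + 1), (-1 : ℝ) ^ i * (r.choose i : ℝ) * (i : ℝ) ^ m
    = (-1) ^ r * (r.factorial : ℝ) * (stirling2 m r : ℝ) := by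
  intro m
  induction m with
  | zero =>
    intro r
    simp only [pow_zero, mul_one]
    have h := Int.alternating_sum_range_choose (n := r)
    have h2 : ∑ i ∈ range (r + 1), (-1 : ℝ) ^ i * (r.choose i : ℝ)
        = if r = 0 then 1 else 0 := by
      have := congrArg (Int.cast : ℤ → ℝ) h
      push_cast at this
      rw [this]
    rw [h2]
    cases r with
    | zero => simp [stirling2]
    | succ s => simp [stirling2]
  | succ m ih =>
    intro r
    cases r with
    | zero => simp [stirling2]
    | succ s =>
      have key : ∀ i ∈ range (s + 2),
          (-1 : ℝ) ^ i * ((s + 1).choose i : ℝ) * (i : ℝ) ^ (m + 1)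
          = ((s : ℝ) + 1) * ((-1 : ℝ) ^ i * ((s + 1).choose i : ℝ) * (i : ℝ) ^ m)
            - ((s : ℝ) + 1) * ((-1 : ℝ) ^ i * (s.choose i : ℝ) * (i : ℝ) ^ m) := by
        intro i _
        have hc : (i : ℝ) * ((s + 1).choose i : ℝ)
            = ((s : ℝ) + 1) * (((s + 1).choose i : ℝ) - (s.choose i : ℝ)) := by
          cases i with
          | zero => simp
          | succ t =>
            have h1 : (s + 1) * s.choose t = (s + 1).choose (t + 1) * (t + 1) :=
              Nat.add_one_mul_choose_eq s t
            have h2 : (s + 1).choose (t + 1) = s.choose t + s.choose (t + 1) :=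
              Nat.choose_succ_succ s t
            rw [h2] at h1
            have h1' : ((s : ℝ) + 1) * (s.choose t : ℝ)
                = ((s.choose t : ℝ) + (s.choose (t + 1) : ℝ)) * ((t : ℝ) + 1) := by
              exact_mod_cast h1
            push_cast [h2]
            linear_combination -h1' 
        rw [pow_succ]
        linear_combination ((-1 : ℝ) ^ i * (i : ℝ) ^ m) * hc
      rw [Finset.sum_congr rfl key, Finset.sum_sub_distrib, ← Finset.mul_sum, ← Finset.mul_sum,
        ih (s + 1)]
      have h3 : ∑ i ∈ range (s + 2), (-1 : ℝ) ^ i * (s.choose i : ℝ) * (i : ℝ) ^ m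
          = ∑ i ∈ range (s + 1), (-1 : ℝ) ^ i * (s.choose i : ℝ) * (i : ℝ) ^ m := by
        rw [Finset.sum_range_succ, Nat.choose_succ_self]
        simp
      rw [h3, ih s]
      have h4 : (stirling2 (m + 1) (s + 1) : ℝ)
          = ((s : ℝ) + 1) * (stirling2 m (s + 1) : ℝ) + (stirling2 m s : ℝ) := by
        show ((((s + 1) * stirling2 m (s + 1) + stirling2 m s : ℕ)) : ℝ) = _
        push_cast
        ring
      rw [h4]
      have h5 : ((s + 1).factorial : ℝ) = ((s : ℝ) + 1) * (s.factorial : ℝ) := by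
        rw [Nat.factorial_succ]; push_cast; ring
      rw [h5]
      ring

/-- `r! (w̃_{n,r}(y) - (r+1) w̃_{n,r+1}(y)) = y^r ∑_{i=0}^r (-1)^{r-i} C(r,i) φ_{n,i}(-y)`. -/
theorem factorial_mul_pdbPoly_sub (n r : ℕ) (y : ℝ) :
    (r.factorial : ℝ) * (pdbPoly n r y - (r + 1 : ℝ) * pdbPoly n (r + 1) y) =
      y ^ r * ∑ i ∈ Finset.range (r + 1),
        (-1 : ℝ) ^ (r - i) * (r.choose i : ℝ) * expPolyR n i (-y) := by
  have e2 : (-1 : ℝ) ^ r * (-1 : ℝ) ^ r = 1 := by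
    rw [← pow_add]; exact Even.neg_one_pow ⟨r, rfl⟩
  have hL : (r.factorial : ℝ) * (pdbPoly n r y - (r + 1 : ℝ) * pdbPoly n (r + 1) y)
      = ∑ k ∈ range (n + 1),
          (stirling2 n k : ℝ) * ((-1) ^ r * (-1) ^ k * (k.descFactorial r : ℝ)) * y ^ k := by
    simp only [pdbPoly, Finset.mul_sum, mul_sub, ← Finset.sum_sub_distrib]
    apply Finset.sum_congr rfl
    intro k _
    linear_combination (stirling2 n k : ℝ) * y ^ k * step2 k r
  have hR : y ^ r * ∑ i ∈ range (r + 1), (-1 : ℝ) ^ (r - i) * (r.choose i : ℝ)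
        * expPolyR n i (-y)
      = (r.factorial : ℝ) * (y ^ r *
          ∑ m ∈ range (n + 1), (n.choose m : ℝ) * (stirling2 m r : ℝ) * expPoly (n - m) (-y)) := by
    have h1 : ∑ i ∈ range (r + 1), (-1 : ℝ) ^ (r - i) * (r.choose i : ℝ) * expPolyR n i (-y)
        = (-1 : ℝ) ^ r * ∑ i ∈ range (r + 1),
            (-1 : ℝ) ^ i * (r.choose i : ℝ) * expPolyR n i (-y) := by
      rw [Finset.mul_sum]
      apply Finset.sum_congr rfl
      intro i hi
      simp only [Finset.mem_range] at hi
      have e : (-1 : ℝ) ^ (r - i) * (-1 : ℝ) ^ i = (-1) ^ r := by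
        rw [← pow_add]; congr 1; omega
      have ei : (-1 : ℝ) ^ i * (-1 : ℝ) ^ i = 1 := by
        rw [← pow_add]; exact Even.neg_one_pow ⟨i, rfl⟩
      linear_combination ((r.choose i : ℝ) * expPolyR n i (-y)) *
        (((-1 : ℝ) ^ i) * e - ((-1 : ℝ) ^ (r - i)) * ei)
    have h2 : ∑ i ∈ range (r + 1), (-1 : ℝ) ^ i * (r.choose i : ℝ) * expPolyR n i (-y)
        = ∑ m ∈ range (n + 1), (n.choose m : ℝ) * expPoly (n - m) (-y) *
            ∑ i ∈ range (r + 1), (-1 : ℝ) ^ i * (r.choose i : ℝ) * (i : ℝ) ^ m := by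
      simp only [expPolyR, Finset.mul_sum]
      rw [Finset.sum_comm]
      apply Finset.sum_congr rfl; intro m _
      apply Finset.sum_congr rfl; intro i _
      ring
    have h3 : ∀ m ∈ range (n + 1), (n.choose m : ℝ) * expPoly (n - m) (-y) *
          ∑ i ∈ range (r + 1), (-1 : ℝ) ^ i * (r.choose i : ℝ) * (i : ℝ) ^ m
        = (n.choose m : ℝ) * expPoly (n - m) (-y)
            * ((-1 : ℝ) ^ r * (r.factorial : ℝ) * (stirling2 m r : ℝ)) := by
      intro m _; rw [lemA m r]
    rw [h1, h2, Finset.sum_congr rfl h3]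
    simp only [Finset.mul_sum]
    apply Finset.sum_congr rfl
    intro m _
    linear_combination (y ^ r * (n.choose m : ℝ) * expPoly (n - m) (-y) * (r.factorial : ℝ)
      * (stirling2 m r : ℝ)) * e2
  rw [hL, hR]
  -- middle identity
  have hc : ∀ k : ℕ, (∑ m ∈ range (n + 1),
        (n.choose m : ℝ) * (stirling2 m r : ℝ) * (stirling2 (n - m) k : ℝ))
      = ((r + k).choose r : ℝ) * (stirling2 n (r + k) : ℝ) := by
    intro k
    exact_mod_cast congrArg (Nat.cast : ℕ → ℝ) (convB n r k)
  have hx : ∀ m ∈ range (n + 1), (n.choose m : ℝ) * (stirling2 m r : ℝ) * expPoly (n - m) (-y)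
      = ∑ k ∈ range (n + 1), (n.choose m : ℝ) * (stirling2 m r : ℝ)
          * ((stirling2 (n - m) k : ℝ) * (-y) ^ k) := by
    intro m hm
    simp only [Finset.mem_range] at hm
    rw [expPoly, Finset.mul_sum]
    apply Finset.sum_subset
    · intro k hk; simp only [Finset.mem_range] at hk ⊢; omega
    · intro k hk hk2
      simp only [Finset.mem_range] at hk hk2
      have : stirling2 (n - m) k = 0 := stirling2_zero_of_lt (by omega)
      simp [this]
  have hRHS2 : ∑ m ∈ range (n + 1), ∑ k ∈ range (n + 1),
        (n.choose m : ℝ) * (stirling2 m r : ℝ) * ((stirling2 (n - m) k : ℝ) * (-y) ^ k)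
      = ∑ k ∈ range (n + 1), ((r + k).choose r : ℝ) * (stirling2 n (r + k) : ℝ) * (-y) ^ k := by
    rw [Finset.sum_comm]
    apply Finset.sum_congr rfl
    intro k _
    rw [← hc k, Finset.sum_mul]
    apply Finset.sum_congr rfl; intro m _; ring
  rw [Finset.sum_congr rfl hx, hRHS2]
  -- now LHS reindex
  have hext : ∑ k ∈ range (n + 1),
        (stirling2 n k : ℝ) * ((-1) ^ r * (-1) ^ k * (k.descFactorial r : ℝ)) * y ^ k
      = ∑ k ∈ range (r + (n + 1)),
        (stirling2 n k : ℝ) * ((-1) ^ r * (-1) ^ k * (k.descFactorial r : ℝ)) * y ^ k := by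
    apply Finset.sum_subset
    · intro k hk; simp only [Finset.mem_range] at hk ⊢; omega
    · intro k hk hk2
      simp only [Finset.mem_range] at hk hk2
      have : stirling2 n k = 0 := stirling2_zero_of_lt (by omega)
      simp [this]
  rw [hext, Finset.sum_range_add]
  have hz : ∑ k ∈ range r,
      (stirling2 n k : ℝ) * ((-1) ^ r * (-1) ^ k * (k.descFactorial r : ℝ)) * y ^ k = 0 := by
    apply Finset.sum_eq_zero
    intro k hk
    simp only [Finset.mem_range] at hk
    have : k.descFactorial r = 0 := Nat.descFactorial_eq_zero_iff_lt.2 hk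
    simp [this]
  rw [hz, zero_add]
  simp only [Finset.mul_sum]
  apply Finset.sum_congr rfl
  intro j _
  have hD : ((r + j).descFactorial r : ℝ) = (r.factorial : ℝ) * ((r + j).choose r : ℝ) := by
    exact_mod_cast congrArg (Nat.cast : ℕ → ℝ)
      (Nat.descFactorial_eq_factorial_mul_choose (r + j) r)
  have hny : (-y : ℝ) ^ j = (-1 : ℝ) ^ j * y ^ j := by rw [neg_pow]
  rw [hD, hny]
  linear_combination ((stirling2 n (r + j) : ℝ) * ((r + j).choose r : ℝ) * (r.factorial : ℝ)
    * (-1 : ℝ) ^ j * y ^ (r + j)) * e2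
end

section
/- For every nonnegative integer n and every real (or polynomial variable) y, ∑_{r=0}^{n} w̃_{n,r}(y) = w_n(y), and ∑_{r=0}^{n} C(n,r)·φ_r(y)·w̃_{n−r}(y) = w_n(y). -/
/-- Geometric polynomials `w_n(y) = ∑_{k=0}^n {n brace k} k! y^k`. -/
def geomPoly (n : ℕ) (y : ℝ) : ℝ :=
  ∑ k ∈ Finset.range (n + 1), (stirling2 n k : ℝ) * (k.factorial : ℝ) * y ^ k

open Finset

lemma stirling2_eq_zero {n k : ℕ} (h : n < k) : stirling2 n k = 0 := by
  induction n generalizing k with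
  | zero => cases k with
    | zero => omega
    | succ k => rfl
  | succ n ih =>
    cases k with
    | zero => omega
    | succ k =>
      rw [stirling2, ih (by omega), ih (by omega)]
      ring

lemma stirling2_succ_zero (n : ℕ) : stirling2 (n + 1) 0 = 0 := rfl

lemma stirling_conv (n j i : ℕ) :
    ∑ r ∈ range (n + 1), n.choose r * stirling2 r j * stirling2 (n - r) i
      = (i + j).choose j * stirling2 n (i + j) := by
  induction n generalizing j i with
  | zero =>
    cases j <;> cases i <;> simp [stirling2]
  | succ n ih =>
    have key : ∑ r ∈ range (n + 2), (n+1).choose r * stirling2 r j * stirling2 (n + 1 - r) i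
        = (∑ r ∈ range (n + 1), n.choose r * stirling2 (r+1) j * stirling2 (n - r) i)
          + ∑ r ∈ range (n + 1), n.choose r * stirling2 r j * stirling2 (n + 1 - r) i := by
      rw [Finset.sum_range_succ']
      have h1 : ∀ r ∈ range (n + 1),
          (n+1).choose (r+1) * stirling2 (r+1) j * stirling2 (n + 1 - (r+1)) i
          = n.choose r * stirling2 (r+1) j * stirling2 (n - r) i
            + n.choose (r+1) * stirling2 (r+1) j * stirling2 (n - r) i := by
        intro r hr
        have : n + 1 - (r + 1) = n - r := by omega
        rw [this, Nat.choose_succ_succ]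
        ring
      rw [Finset.sum_congr rfl h1, Finset.sum_add_distrib]
      have h2 : ∑ r ∈ range (n + 1), n.choose r * stirling2 r j * stirling2 (n + 1 - r) i
          = (∑ r ∈ range (n + 1), n.choose (r+1) * stirling2 (r+1) j * stirling2 (n - r) i)
            + (n+1).choose 0 * stirling2 0 j * stirling2 (n + 1 - 0) i := by
        have := Finset.sum_range_succ'
          (fun r => n.choose r * stirling2 r j * stirling2 (n + 1 - r) i) (n + 1)
        rw [Finset.sum_range_succ] at this
        simp only [Nat.choose_succ_self, Nat.zero_mul, Nat.mul_zero, zero_mul, add_zero,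
          Nat.choose_zero_right, Nat.sub_zero] at this ⊢
        rw [this]
        congr 1
        apply Finset.sum_congr rfl
        intro r hr
        have : n + 1 - (r + 1) = n - r := by omega
        rw [this]
      rw [h2]
      ring
    rw [key]
    have hA : ∀ j' , (∑ r ∈ range (n + 1), n.choose r * stirling2 (r+1) (j'+1) * stirling2 (n - r) i)
        = (j'+1) * ((i + (j'+1)).choose (j'+1) * stirling2 n (i + (j'+1)))
          + (i + j').choose j' * stirling2 n (i + j') := by
      intro j'
      have : ∀ r ∈ range (n + 1),
          n.choose r * stirling2 (r+1) (j'+1) * stirling2 (n - r) i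
          = (j'+1) * (n.choose r * stirling2 r (j'+1) * stirling2 (n - r) i)
            + n.choose r * stirling2 r j' * stirling2 (n - r) i := by
        intro r hr
        rw [stirling2]
        ring
      rw [Finset.sum_congr rfl this, Finset.sum_add_distrib, ← Finset.mul_sum, ih, ih]
    have hA0 : (∑ r ∈ range (n + 1), n.choose r * stirling2 (r+1) 0 * stirling2 (n - r) i) = 0 := by
      apply Finset.sum_eq_zero
      intro r hr
      rw [stirling2_succ_zero]
      ring
    have hL1 : ∀ i', (∑ r ∈ range (n + 1), n.choose r * stirling2 r j * stirling2 (n + 1 - r) (i'+1))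
        = (i'+1) * (((i'+1) + j).choose j * stirling2 n ((i'+1) + j))
          + (i' + j).choose j * stirling2 n (i' + j) := by
      intro i'
      have : ∀ r ∈ range (n + 1),
          n.choose r * stirling2 r j * stirling2 (n + 1 - r) (i'+1)
          = (i'+1) * (n.choose r * stirling2 r j * stirling2 (n - r) (i'+1))
            + n.choose r * stirling2 r j * stirling2 (n - r) i' := by
        intro r hr
        have hnr : n + 1 - r = (n - r) + 1 := by
          have := Finset.mem_range.mp hr; omega
        rw [hnr, stirling2]
        ring
      rw [Finset.sum_congr rfl this, Finset.sum_add_distrib, ← Finset.mul_sum, ih, ih]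
    have hL10 : (∑ r ∈ range (n + 1), n.choose r * stirling2 r j * stirling2 (n + 1 - r) 0) = 0 := by
      apply Finset.sum_eq_zero
      intro r hr
      have hnr : n + 1 - r = (n - r) + 1 := by
        have := Finset.mem_range.mp hr; omega
      rw [hnr, stirling2_succ_zero]
      ring
    cases j with
    | zero =>
      cases i with
      | zero =>
        rw [hA0, hL10]
        simp [stirling2_succ_zero]
      | succ i' =>
        rw [hA0, hL1 i', zero_add]
        simp only [Nat.add_zero, Nat.choose_zero_right, Nat.choose_self, one_mul]
        rw [stirling2]
    | succ j' =>
      cases i with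
      | zero =>
        rw [hA j', hL10, add_zero]
        simp only [Nat.zero_add, Nat.choose_self, one_mul]
        rw [stirling2]
      | succ i' =>
        rw [hA j', hL1 i']
        have e1 : i' + 1 + (j' + 1) = (i' + j' + 1) + 1 := by omega
        have e2 : i' + (j' + 1) = i' + j' + 1 := by omega
        have e3 : i' + 1 + j' = i' + j' + 1 := by omega
        rw [e1, e2, e3, stirling2]
        have hp : ((i' + j' + 1) + 1).choose (j' + 1)
            = (i' + j' + 1).choose j' + (i' + j' + 1).choose (j' + 1) :=
          Nat.choose_succ_succ _ _
        rw [hp]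
        ring

lemma alt_zero (m : ℕ) :
    ∑ r ∈ range (m + 2),
      (1 / (r.factorial : ℝ)) * ((-1 : ℝ) ^ (m + 1 - r) / ((m + 1 - r).factorial : ℝ)) = 0 := by
  have h1 : ∀ r ∈ range (m + 2),
      (1 / (r.factorial : ℝ)) * ((-1 : ℝ) ^ (m + 1 - r) / ((m + 1 - r).factorial : ℝ))
      = ((-1 : ℝ) ^ (m + 1) / ((m + 1).factorial : ℝ)) * ((-1 : ℝ) ^ r * ((m + 1).choose r : ℝ)) := by
    intro r hr
    have hr' : r ≤ m + 1 := by have := Finset.mem_range.mp hr; omega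
    have h := Nat.choose_mul_factorial_mul_factorial hr'
    have h' : ((m + 1).choose r : ℝ) * (r.factorial : ℝ) * ((m + 1 - r).factorial : ℝ)
        = ((m + 1).factorial : ℝ) := by exact_mod_cast h
    have hs : (-1 : ℝ) ^ (m + 1 - r) * (-1 : ℝ) ^ r = (-1 : ℝ) ^ (m + 1) := by
      rw [← pow_add]; congr 1; omega
    have hr0 : (r.factorial : ℝ) ≠ 0 := Nat.cast_ne_zero.mpr r.factorial_ne_zero
    have hmr0 : ((m + 1 - r).factorial : ℝ) ≠ 0 := Nat.cast_ne_zero.mpr (m + 1 - r).factorial_ne_zero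
    have hm0 : ((m + 1).factorial : ℝ) ≠ 0 := Nat.cast_ne_zero.mpr (m + 1).factorial_ne_zero
    have hsq : (-1 : ℝ) ^ r * (-1 : ℝ) ^ r = 1 := by
      rw [← pow_add]; exact Even.neg_one_pow ⟨r, rfl⟩
    have hsgn : (-1 : ℝ) ^ (m + 1) * (-1 : ℝ) ^ r = (-1 : ℝ) ^ (m + 1 - r) := by
      rw [← hs, mul_assoc, hsq, mul_one]
    have hc : (1 : ℝ) / ((r.factorial : ℝ) * ((m + 1 - r).factorial : ℝ))
        = ((m + 1).choose r : ℝ) / ((m + 1).factorial : ℝ) := by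
      rw [div_eq_div_iff (mul_ne_zero hr0 hmr0) hm0]
      linear_combination -h'
    have e : (1 / (r.factorial : ℝ)) * ((-1 : ℝ) ^ (m + 1 - r) / ((m + 1 - r).factorial : ℝ))
        = (-1 : ℝ) ^ (m + 1 - r) * ((1 : ℝ) / ((r.factorial : ℝ) * ((m + 1 - r).factorial : ℝ))) := by
      ring
    rw [e, hc, ← hsgn]
    ring
  rw [Finset.sum_congr rfl h1, ← Finset.mul_sum]
  have h2 : ∑ r ∈ range (m + 2), ((-1 : ℝ) ^ r * ((m + 1).choose r : ℝ)) = 0 := by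
    exact_mod_cast Int.alternating_sum_range_choose_of_ne (Nat.succ_ne_zero m)
  rw [h2, mul_zero]

lemma tri_one (k : ℕ) :
    ∑ r ∈ range (k + 1),
      (1 / (r.factorial : ℝ)) * ∑ i ∈ range (k + 1 - r), (-1 : ℝ) ^ i / (i.factorial : ℝ) = 1 := by
  induction k with
  | zero => norm_num
  | succ k ih =>
    rw [Finset.sum_range_succ]
    have e0 : k + 1 + 1 - (k + 1) = 1 := by omega
    rw [e0]
    have h1 : ∀ r ∈ range (k + 1),
        (1 / (r.factorial : ℝ)) * ∑ i ∈ range (k + 1 + 1 - r), (-1 : ℝ) ^ i / (i.factorial : ℝ)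
        = (1 / (r.factorial : ℝ)) * ∑ i ∈ range (k + 1 - r), (-1 : ℝ) ^ i / (i.factorial : ℝ)
          + (1 / (r.factorial : ℝ)) * ((-1 : ℝ) ^ (k + 1 - r) / ((k + 1 - r).factorial : ℝ)) := by
      intro r hr
      have e1 : k + 1 + 1 - r = (k + 1 - r) + 1 := by have := Finset.mem_range.mp hr; omega
      rw [e1, Finset.sum_range_succ]
      ring
    rw [Finset.sum_congr rfl h1, Finset.sum_add_distrib, ih]
    have h := alt_zero k
    rw [Finset.sum_range_succ] at h
    have e2 : k + 1 - (k + 1) = 0 := by omega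
    rw [e2] at h
    simp only [Finset.sum_range_one, pow_zero, Nat.factorial_zero, Nat.cast_one] at h ⊢
    linarith [h]

lemma sum_pderang (k : ℕ) :
    ∑ r ∈ range (k + 1), pderang k r = (k.factorial : ℝ) := by
  have h1 : ∀ r ∈ range (k + 1), pderang k r
      = (k.factorial : ℝ) *
        ((1 / (r.factorial : ℝ)) * ∑ i ∈ range (k + 1 - r), (-1 : ℝ) ^ i / (i.factorial : ℝ)) := by
    intro r hr
    have hrk : r ≤ k := by have := Finset.mem_range.mp hr; omega
    rw [pderang, if_pos hrk, derang]
    have e1 : k - r + 1 = k + 1 - r := by omega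
    rw [e1]
    have h := Nat.choose_mul_factorial_mul_factorial hrk
    have h' : (k.choose r : ℝ) * (r.factorial : ℝ) * ((k - r).factorial : ℝ)
        = (k.factorial : ℝ) := by exact_mod_cast h
    have hr0 : (r.factorial : ℝ) ≠ 0 := Nat.cast_ne_zero.mpr r.factorial_ne_zero
    have hc : (k.choose r : ℝ) * ((k - r).factorial : ℝ) = (k.factorial : ℝ) / (r.factorial : ℝ) := by
      field_simp
      linarith [h']
    rw [← mul_assoc, hc]
    ring
  rw [Finset.sum_congr rfl h1, ← Finset.mul_sum, tri_one, mul_one]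

/-- `∑_{r=0}^n w̃_{n,r}(y) = w_n(y)` and
`∑_{r=0}^n C(n,r) φ_r(y) w̃_{n-r}(y) = w_n(y)`. -/
theorem sum_pdbPoly_eq_geomPoly (n : ℕ) (y : ℝ) :
    (∑ r ∈ Finset.range (n + 1), pdbPoly n r y = geomPoly n y) ∧
    (∑ r ∈ Finset.range (n + 1),
        (n.choose r : ℝ) * expPoly r y * pdbPoly (n - r) 0 y = geomPoly n y) := by
  constructor
  · unfold pdbPoly geomPoly
    rw [Finset.sum_comm]
    apply Finset.sum_congr rfl
    intro k hk
    have hkn : k ≤ n := by have := Finset.mem_range.mp hk; omega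
    have hsum : ∑ r ∈ range (n + 1), pderang k r = (k.factorial : ℝ) := by
      rw [← sum_pderang k]
      symm
      apply Finset.sum_subset (Finset.range_subset_range.mpr (by omega))
      intro x hx hnx
      have hxk : ¬ x ≤ k := by
        rw [Finset.mem_range] at hnx; omega
      rw [pderang, if_neg hxk]
    rw [← Finset.sum_mul, ← Finset.mul_sum, hsum]
  · unfold geomPoly
    have hexp : ∀ r, r ≤ n → expPoly r y = ∑ j ∈ range (n + 1), (stirling2 r j : ℝ) * y ^ j := by
      intro r hr
      unfold expPoly
      apply Finset.sum_subset (Finset.range_subset_range.mpr (by omega))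
      intro x hx hnx
      have hrx : r < x := by rw [Finset.mem_range] at hnx; omega
      rw [stirling2_eq_zero hrx]
      simp
    have hpdb : ∀ r, r ≤ n →
        pdbPoly r 0 y = ∑ i ∈ range (n + 1), (stirling2 r i : ℝ) * derang i * y ^ i := by
      intro r hr
      unfold pdbPoly
      have h0 : ∀ k ∈ range (r + 1), (stirling2 r k : ℝ) * pderang k 0 * y ^ k
          = (stirling2 r k : ℝ) * derang k * y ^ k := by
        intro k _
        rw [pderang, if_pos (Nat.zero_le k), Nat.choose_zero_right, Nat.sub_zero, Nat.cast_one,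
          one_mul]
      rw [Finset.sum_congr rfl h0]
      apply Finset.sum_subset (Finset.range_subset_range.mpr (by omega))
      intro x hx hnx
      have hrx : r < x := by rw [Finset.mem_range] at hnx; omega
      rw [stirling2_eq_zero hrx]
      simp
    have step1 : ∑ r ∈ range (n + 1), (n.choose r : ℝ) * expPoly r y * pdbPoly (n - r) 0 y
        = ∑ r ∈ range (n + 1), ∑ j ∈ range (n + 1), ∑ i ∈ range (n + 1),
            ((n.choose r : ℝ) * ((stirling2 r j : ℝ) * y ^ j))
              * ((stirling2 (n - r) i : ℝ) * derang i * y ^ i) := by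
      apply Finset.sum_congr rfl
      intro r hr
      have hrn : r ≤ n := by have := Finset.mem_range.mp hr; omega
      rw [hexp r hrn, hpdb (n - r) (Nat.sub_le n r)]
      simp only [Finset.mul_sum, Finset.sum_mul]
      rw [Finset.sum_comm]
    rw [step1, Finset.sum_comm]
    have step2 : ∀ j ∈ range (n + 1),
        (∑ r ∈ range (n + 1), ∑ i ∈ range (n + 1),
          ((n.choose r : ℝ) * ((stirling2 r j : ℝ) * y ^ j))
            * ((stirling2 (n - r) i : ℝ) * derang i * y ^ i))
        = ∑ i ∈ range (n + 1),
            (((i + j).choose j : ℝ) * (stirling2 n (i + j) : ℝ)) * (derang i * y ^ j * y ^ i) := by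
      intro j _
      rw [Finset.sum_comm]
      apply Finset.sum_congr rfl
      intro i _
      have hterm : ∀ r ∈ range (n + 1),
          ((n.choose r : ℝ) * ((stirling2 r j : ℝ) * y ^ j))
            * ((stirling2 (n - r) i : ℝ) * derang i * y ^ i)
          = ((n.choose r : ℝ) * (stirling2 r j : ℝ) * (stirling2 (n - r) i : ℝ))
              * (derang i * y ^ j * y ^ i) := by
        intro r _
        ring
      rw [Finset.sum_congr rfl hterm, ← Finset.sum_mul]
      have hconv : (∑ r ∈ range (n + 1),
          (n.choose r : ℝ) * (stirling2 r j : ℝ) * (stirling2 (n - r) i : ℝ))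
          = ((i + j).choose j : ℝ) * (stirling2 n (i + j) : ℝ) := by
        exact_mod_cast congrArg (Nat.cast : ℕ → ℝ) (stirling_conv n j i)
      rw [hconv]
    rw [Finset.sum_congr rfl step2]
    have step3 : ∀ j ∈ range (n + 1),
        (∑ i ∈ range (n + 1),
          (((i + j).choose j : ℝ) * (stirling2 n (i + j) : ℝ)) * (derang i * y ^ j * y ^ i))
        = ∑ i ∈ range (n + 1 - j),
            (((i + j).choose j : ℝ) * (stirling2 n (i + j) : ℝ)) * (derang i * y ^ j * y ^ i) := by
      intro j hj
      have hjn : j ≤ n := by have := Finset.mem_range.mp hj; omega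
      symm
      apply Finset.sum_subset (Finset.range_subset_range.mpr (by omega))
      intro x hx hnx
      have hbig : n < x + j := by rw [Finset.mem_range] at hnx; omega
      rw [stirling2_eq_zero hbig]
      simp
    rw [Finset.sum_congr rfl step3,
      ← Finset.sum_range_diag_flip (n + 1)
        (fun a b => (((b + a).choose a : ℝ) * (stirling2 n (b + a) : ℝ))
          * (derang b * y ^ a * y ^ b))]
    apply Finset.sum_congr rfl
    intro m hm
    have hfin : ∀ k ∈ range (m + 1),
        (((m - k + k).choose k : ℝ) * (stirling2 n (m - k + k) : ℝ))
          * (derang (m - k) * y ^ k * y ^ (m - k))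
        = ((stirling2 n m : ℝ) * y ^ m) * pderang m k := by
      intro k hk
      have hkm : k ≤ m := by have := Finset.mem_range.mp hk; omega
      have e1 : m - k + k = m := by omega
      have e2 : y ^ k * y ^ (m - k) = y ^ m := by rw [← pow_add]; congr 1; omega
      rw [e1, pderang, if_pos hkm]
      calc ((m.choose k : ℝ) * (stirling2 n m : ℝ)) * (derang (m - k) * y ^ k * y ^ (m - k))
          = ((stirling2 n m : ℝ) * (y ^ k * y ^ (m - k)))
              * ((m.choose k : ℝ) * derang (m - k)) := by ring
        _ = ((stirling2 n m : ℝ) * y ^ m) * ((m.choose k : ℝ) * derang (m - k)) := by rw [e2]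
    rw [Finset.sum_congr rfl hfin, ← Finset.mul_sum, sum_pderang]
    ring
end
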